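/- Let N = (Q, s, δ, F) be an NFA with n states (over a finite linearly ordered alphabet Σ, single initial state, every state reachable from s and every state able to reach a final state), let ≤ be a co-lex order on N, and let {Q_1, …, Q_p} be a ≤-chain partition of Q into p nonempty chains (so p ≤ n). Let Reach = {I_α | α ∈ Pref(L(N))} be the state set of the powerset (subset-construction) DFA of N, and define the relation ≤* on Reach by: S ≤* T iff S = T, or for all α, β ∈ Pref(L(N)), if I_α = S and I_β = T then α ≺ β (strict co-lex order on words); ≤* is the maximum co-lex order on the powerset DFA. Then: (1) Reach can be partitioned into at most 2^p − 1 classes each of which is pairwise comparable under ≤* (hence the powerset DFA has co-lex width at most 2^p − 1); and (2) the cardinality of Reach is at most 2^p · (n − p + 1) − 1. -/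

import Mathlib

/-- Strict co-lexicographic order on words: compare reversed words lexicographically. -/
def colexLt {A : Type} [LinearOrder A] (α β : List A) : Prop :=
  List.Lex (· < ·) α.reverse β.reverse

/-- Co-lexicographic order (reflexive version). -/
def colexLe {A : Type} [LinearOrder A] (α β : List A) : Prop :=
  colexLt α β ∨ α = β

/-- The prefix closure of a language. -/
def Pref {A : Type} (L : Set (List A)) : Set (List A) :=
  {α | ∃ γ : List A, α ++ γ ∈ L}

/-- The Myhill–Nerode equivalence of a language. -/
def NerodeEq {A : Type} (L : Set (List A)) (α β : List A) : Prop :=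
  ∀ γ : List A, α ++ γ ∈ L ↔ β ++ γ ∈ L

/-- A monotone (nondecreasing or nonincreasing) sequence of words w.r.t. co-lex order. -/
def MonotoneSeq {A : Type} [LinearOrder A] (α : ℕ → List A) : Prop :=
  (∀ i, colexLe (α i) (α (i + 1))) ∨ (∀ i, colexLe (α (i + 1)) (α i))

/-- A partition of the state set into `p` chains with respect to the relation `le`. -/
def IsChainPartition {Q : Type} (le : Q → Q → Prop) (p : ℕ) (f : Fin p → Set Q) : Prop :=
  (∀ q : Q, ∃! i : Fin p, q ∈ f i) ∧
  ∀ i : Fin p, ∀ u ∈ f i, ∀ v ∈ f i, le u v ∨ le v u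

/-- A nondeterministic finite automaton with a single initial state. -/
structure NFA' (A Q : Type) where
  start : Q
  delta : Q → A → Set Q
  accept : Set Q

namespace NFA'

variable {A Q : Type}

/-- Extended transition function on words. -/
def deltaStar (N : NFA' A Q) : Q → List A → Set Q
  | q, [] => {q}
  | q, a :: w => ⋃ r ∈ N.delta q a, N.deltaStar r w

/-- `N.Iw α` is the set of states reached from the initial state reading `α`. -/
def Iw (N : NFA' A Q) (α : List A) : Set Q :=
  N.deltaStar N.start α

/-- `N.Iq q` is the set of words reaching `q` from the initial state. -/
def Iq (N : NFA' A Q) (q : Q) : Set (List A) :=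
  {α | q ∈ N.Iw α}

/-- The accepted language. -/
def lang (N : NFA' A Q) : Set (List A) :=
  {α | ∃ q ∈ N.accept, q ∈ N.Iw α}

/-- Labels of transitions entering a state, with the extra bottom symbol `#`
added exactly for the initial state. -/
def lam (N : NFA' A Q) (q : Q) : Set (WithBot A) :=
  {x | ∃ (a : A) (u : Q), x = (a : WithBot A) ∧ q ∈ N.delta u a} ∪
    {x | q = N.start ∧ x = (⊥ : WithBot A)}

/-- Every state is reachable from the initial state. -/
def Reachable (N : NFA' A Q) : Prop :=
  ∀ q : Q, ∃ α : List A, q ∈ N.Iw α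

/-- Every state can reach a final state. -/
def Useful (N : NFA' A Q) : Prop :=
  ∀ q : Q, ∃ (β : List A) (f : Q), f ∈ N.accept ∧ f ∈ N.deltaStar q β

end NFA'

/-- A co-lex order on an NFA: a partial order on the states satisfying Axioms 1 and 2. -/
structure IsColexNFA {A Q : Type} [LinearOrder A] (N : NFA' A Q) (le : Q → Q → Prop) : Prop where
  refl : ∀ u, le u u
  antisymm : ∀ u v, le u v → le v u → u = v
  trans : ∀ u v w, le u v → le v w → le u w
  ax1 : ∀ u v, le u v → u ≠ v → ∀ a ∈ N.lam u, ∀ b ∈ N.lam v, a ≤ b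
  ax2 : ∀ (a : A) (u v u' v' : Q),
      u ∈ N.delta u' a → v ∈ N.delta v' a → le u v → u ≠ v → le u' v'

/-- The states of the powerset DFA: the nonempty sets `I_α` for `α ∈ Pref (L(N))`. -/
def powReach {A Q : Type} (N : NFA' A Q) : Set (Set Q) :=
  {S | ∃ α ∈ Pref N.lang, S = N.Iw α}

/-- The maximum co-lex order `≤*` on the powerset DFA of `N`. -/
def powLe {A Q : Type} [LinearOrder A] (N : NFA' A Q) (S T : Set Q) : Prop :=
  S = T ∨ ∀ α ∈ Pref N.lang, ∀ β ∈ Pref N.lang, N.Iw α = S → N.Iw β = T → colexLt α β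
section Aux

attribute [local instance] Classical.propDecidable

variable {A Q : Type} [LinearOrder A] [Fintype Q]

theorem colexLt_trichotomy (α β : List A) : colexLt α β ∨ α = β ∨ colexLt β α := by
  rcases lt_trichotomy α.reverse β.reverse with h | h | h
  · exact Or.inl h
  · exact Or.inr (Or.inl (List.reverse_injective h))
  · exact Or.inr (Or.inr h)

theorem NFA'.deltaStar_append (N : NFA' A Q) (q : Q) (α γ : List A) :
    N.deltaStar q (α ++ γ) = ⋃ r ∈ N.deltaStar q α, N.deltaStar r γ := by
  induction α generalizing q with
  | nil => simp [NFA'.deltaStar]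
  | cons a w ih =>
    ext x
    simp [NFA'.deltaStar, ih]

theorem NFA'.mem_Iw_concat {N : NFA' A Q} {α : List A} {a : A} {u : Q} :
    u ∈ N.Iw (α ++ [a]) ↔ ∃ u', u' ∈ N.Iw α ∧ u ∈ N.delta u' a := by
  simp [NFA'.Iw, NFA'.deltaStar_append, NFA'.deltaStar]

theorem lemA {N : NFA' A Q} {le : Q → Q → Prop} (h : IsColexNFA N le) :
    ∀ (α β : List A) (u v : Q), le u v → u ∈ N.Iw α → v ∈ N.Iw β →
      colexLt β α → v ∈ N.Iw α ∧ u ∈ N.Iw β := by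
  intro α
  induction α using List.reverseRecOn with
  | nil =>
    intro β u v _ _ _ hlt
    exact absurd hlt (by simp [colexLt])
  | append_singleton α' a ih =>
    intro β u v huv hu hv hlt
    rcases List.eq_nil_or_concat β with rfl | ⟨β', b, rfl⟩
    · have hv' : v = N.start := by simpa [NFA'.Iw, NFA'.deltaStar] using hv
      rcases NFA'.mem_Iw_concat.mp hu with ⟨u', hu', hua⟩
      by_cases huv' : u = v
      · subst huv'; exact ⟨hu, hv⟩
      · have h1 : (a : WithBot A) ∈ N.lam u := Or.inl ⟨a, u', rfl, hua⟩
        have h2 : (⊥ : WithBot A) ∈ N.lam v := Or.inr ⟨hv', rfl⟩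
        exact absurd (h.ax1 u v huv huv' _ h1 _ h2) (by simp)
    · simp only [List.concat_eq_append] at hv hlt ⊢
      rcases NFA'.mem_Iw_concat.mp hu with ⟨u', hu', hua⟩
      rcases NFA'.mem_Iw_concat.mp hv with ⟨v', hv', hvb⟩
      by_cases huv' : u = v
      · subst huv'; exact ⟨hu, hv⟩
      · have hlt' : List.Lex (· < ·) (b :: β'.reverse) (a :: α'.reverse) := by
          simpa [colexLt, List.reverse_append] using hlt
        have hab : (a : WithBot A) ≤ (b : WithBot A) :=
          h.ax1 u v huv huv' _ (Or.inl ⟨a, u', rfl, hua⟩) _ (Or.inl ⟨b, v', rfl, hvb⟩)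
        have hab' : a ≤ b := by exact_mod_cast hab
        cases hlt' with
        | rel hba => exact absurd hba (not_lt.mpr hab')
        | cons htail =>
          have hle' := h.ax2 a u v u' v' hua hvb huv huv'
          have hIH := ih β' u' v' hle' hu' hv' htail
          exact ⟨NFA'.mem_Iw_concat.mpr ⟨v', hIH.1, hvb⟩,
                 NFA'.mem_Iw_concat.mpr ⟨u', hIH.2, hua⟩⟩

theorem convexA {N : NFA' A Q} {le : Q → Q → Prop} (h : IsColexNFA N le)
    (hreach : N.Reachable) {β : List A} {u w w' : Q}
    (h1 : le w u) (h2 : le u w') (hw : w ∈ N.Iw β) (hw' : w' ∈ N.Iw β) :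
    u ∈ N.Iw β := by
  obtain ⟨γ, hγ⟩ := hreach u
  rcases colexLt_trichotomy γ β with hlt | rfl | hlt
  · exact (lemA h β γ w u h1 hw hγ hlt).1
  · exact hγ
  · exact (lemA h γ β u w' h2 hγ hw' hlt).2

theorem Iw_nonempty_of_pref {N : NFA' A Q} {α : List A} (hα : α ∈ Pref N.lang) :
    (N.Iw α).Nonempty := by
  obtain ⟨γ, q, hq, hmem⟩ := hα
  rw [NFA'.Iw, NFA'.deltaStar_append] at hmem
  simp only [Set.mem_iUnion] at hmem
  obtain ⟨r, hr, _⟩ := hmem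
  exact ⟨r, hr⟩

end Aux
set_option linter.unusedSectionVars false

section Aux2

attribute [local instance] Classical.propDecidable

variable {A Q : Type} [LinearOrder A] [Fintype Q]

theorem keyC {N : NFA' A Q} {le : Q → Q → Prop} (h : IsColexNFA N le) {p : ℕ}
    {f : Fin p → Set Q} (hpart : IsChainPartition le p f) {S T : Set Q}
    (hsig : ∀ i, (S ∩ f i).Nonempty ↔ (T ∩ f i).Nonempty)
    {α β : List A} (hS : N.Iw α = S) (hT : N.Iw β = T) (hαβ : colexLt α β)
    (hne : S ≠ T) :
    ∀ α' β', N.Iw α' = S → N.Iw β' = T → colexLt α' β' := by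
  intro α' β' hS' hT'
  rcases colexLt_trichotomy α' β' with h1 | rfl | h1
  · exact h1
  · exact absurd (hS'.symm.trans hT') hne
  · exfalso
    apply hne
    ext u
    constructor
    · intro huS
      obtain ⟨i, hi, _⟩ := hpart.1 u
      obtain ⟨v, hvT, hvi⟩ := (hsig i).mp ⟨u, huS, hi⟩
      rcases hpart.2 i u hi v hvi with huv | hvu
      · have := lemA h α' β' u v huv (by rw [hS']; exact huS) (by rw [hT']; exact hvT) h1
        rw [hT'] at this; exact this.2
      · have := lemA h β α v u hvu (by rw [hT]; exact hvT) (by rw [hS]; exact huS) hαβ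
        rw [hT] at this; exact this.1
    · intro huT
      obtain ⟨i, hi, _⟩ := hpart.1 u
      obtain ⟨v, hvS, hvi⟩ := (hsig i).mpr ⟨u, huT, hi⟩
      rcases hpart.2 i u hi v hvi with huv | hvu
      · have := lemA h β α u v huv (by rw [hT]; exact huT) (by rw [hS]; exact hvS) hαβ
        rw [hS] at this; exact this.2
      · have := lemA h α' β' v u hvu (by rw [hS']; exact hvS) (by rw [hT']; exact huT) h1
        rw [hS'] at this; exact this.1

/-- Rank of a state within a chain set. -/
noncomputable def rkF (le : Q → Q → Prop) (s : Set Q) (q : Q) : ℕ :=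
  Set.ncard {r ∈ s | le r q}

noncomputable def MxF (le : Q → Q → Prop) (s S : Set Q) : ℕ :=
  sSup (rkF le s '' (S ∩ s))

noncomputable def mnF (le : Q → Q → Prop) (s S : Set Q) : ℕ :=
  sInf (rkF le s '' (S ∩ s))

variable {le : Q → Q → Prop} {s : Set Q}

theorem rk_mono (htr : ∀ u v w, le u v → le v w → le u w) {u v : Q}
    (huv : le u v) : rkF le s u ≤ rkF le s v := by
  apply Set.ncard_le_ncard _ (Set.toFinite _)
  rintro r ⟨hr, hru⟩
  exact ⟨hr, htr _ _ _ hru huv⟩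

theorem rk_strict (hcolex : ∀ u v, le u v → le v u → u = v)
    (htr : ∀ u v w, le u v → le v w → le u w) (hrefl : ∀ u, le u u)
    {u v : Q} (hv : v ∈ s) (huv : le u v) (hne : u ≠ v) :
    rkF le s u < rkF le s v := by
  apply Set.ncard_lt_ncard _ (Set.toFinite _)
  constructor
  · rintro r ⟨hr, hru⟩; exact ⟨hr, htr _ _ _ hru huv⟩
  · intro hsub
    have : v ∈ {r | r ∈ s ∧ le r u} := hsub ⟨hv, hrefl v⟩
    exact hne (hcolex u v huv this.2)

theorem rk_pos {u : Q} (hu : u ∈ s) (hrefl : ∀ u, le u u) : 1 ≤ rkF le s u := by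
  rw [Nat.one_le_iff_ne_zero, ← Nat.pos_iff_ne_zero]
  rw [rkF, Set.ncard_pos (Set.toFinite _)]
  exact ⟨u, hu, hrefl u⟩

theorem rk_le_card {u : Q} : rkF le s u ≤ s.ncard :=
  Set.ncard_le_ncard (fun r hr => hr.1) (Set.toFinite _)

theorem rk_inj (hcolex : ∀ u v, le u v → le v u → u = v)
    (htr : ∀ u v w, le u v → le v w → le u w) (hrefl : ∀ u, le u u)
    {u v : Q} (hu : u ∈ s) (hv : v ∈ s) (hcomp : le u v ∨ le v u)
    (heq : rkF le s u = rkF le s v) : u = v := by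
  rcases hcomp with h1 | h1
  · by_contra hne
    exact absurd heq (Nat.ne_of_lt (rk_strict hcolex htr hrefl hv h1 hne))
  · by_contra hne
    exact absurd heq.symm (Nat.ne_of_lt (rk_strict hcolex htr hrefl hu h1 (Ne.symm hne)))

theorem MxF_mem {S : Set Q} (hS : (S ∩ s).Nonempty) :
    ∃ u ∈ S ∩ s, rkF le s u = MxF le s S := by
  have := Nat.sSup_mem (hS.image (rkF le s)) ((Set.toFinite _).image (rkF le s)).bddAbove
  obtain ⟨u, hu, hru⟩ := this
  exact ⟨u, hu, hru⟩

theorem mnF_mem {S : Set Q} (hS : (S ∩ s).Nonempty) :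
    ∃ u ∈ S ∩ s, rkF le s u = mnF le s S := by
  have := Nat.sInf_mem (hS.image (rkF le s))
  obtain ⟨u, hu, hru⟩ := this
  exact ⟨u, hu, hru⟩

theorem le_MxF {S : Set Q} {u : Q} (hu : u ∈ S ∩ s) : rkF le s u ≤ MxF le s S :=
  le_csSup ((Set.toFinite _).image (rkF le s)).bddAbove ⟨u, hu, rfl⟩

theorem mnF_le {S : Set Q} {u : Q} (hu : u ∈ S ∩ s) : mnF le s S ≤ rkF le s u :=
  Nat.sInf_le ⟨u, hu, rfl⟩

end Aux2
section Aux3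

attribute [local instance] Classical.propDecidable

variable {A Q : Type} [LinearOrder A] [Fintype Q]

/-- Monotonicity of per-chain min/max ranks along the co-lex order of words. -/
theorem mono_lemma {N : NFA' A Q} {le : Q → Q → Prop} (h : IsColexNFA N le)
    {s : Set Q} (hchain : ∀ u ∈ s, ∀ v ∈ s, le u v ∨ le v u)
    {α β : List A} {S T : Set Q} (hS : N.Iw α = S) (hT : N.Iw β = T)
    (hαβ : colexLt α β) (hSne : (S ∩ s).Nonempty) (hTne : (T ∩ s).Nonempty) :
    mnF le s S ≤ mnF le s T ∧ MxF le s S ≤ MxF le s T := by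
  constructor
  · obtain ⟨u, hu, hru⟩ := mnF_mem (le := le) hSne
    obtain ⟨v, hv, hrv⟩ := mnF_mem (le := le) hTne
    rcases hchain u hu.2 v hv.2 with h1 | h1
    · rw [← hru, ← hrv]
      exact rk_mono h.trans h1
    · -- le v u : cross lemma puts v in S as well
      have := lemA h β α v u h1 (by rw [hT]; exact hv.1) (by rw [hS]; exact hu.1) hαβ
      have hvS : v ∈ S ∩ s := ⟨by rw [← hS]; exact this.2, hv.2⟩
      rw [← hrv]
      exact mnF_le hvS
  · obtain ⟨u, hu, hru⟩ := MxF_mem (le := le) hSne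
    obtain ⟨v, hv, hrv⟩ := MxF_mem (le := le) hTne
    rcases hchain u hu.2 v hv.2 with h1 | h1
    · rw [← hru, ← hrv]
      exact rk_mono h.trans h1
    · have := lemA h β α v u h1 (by rw [hT]; exact hv.1) (by rw [hS]; exact hu.1) hαβ
      have huT : u ∈ T ∩ s := ⟨by rw [← hT]; exact this.1, hu.2⟩
      rw [← hru]
      exact le_MxF huT

/-- If per-chain min/max ranks of `S` agree with those of `T = Iw β`, then `S ⊆ T`. -/
theorem half_lemma {N : NFA' A Q} {le : Q → Q → Prop} (h : IsColexNFA N le)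
    (hreach : N.Reachable) {p : ℕ} {f : Fin p → Set Q}
    (hpart : IsChainPartition le p f) {β : List A} {S T : Set Q}
    (hT : N.Iw β = T)
    (hcond : ∀ i, (S ∩ f i).Nonempty → ((T ∩ f i).Nonempty ∧
      mnF le (f i) T ≤ mnF le (f i) S ∧ MxF le (f i) S ≤ MxF le (f i) T)) :
    S ⊆ T := by
  intro u huS
  obtain ⟨i, hi, _⟩ := hpart.1 u
  have hSne : (S ∩ f i).Nonempty := ⟨u, huS, hi⟩
  obtain ⟨hTne, hmn, hMx⟩ := hcond i hSne
  obtain ⟨v1, hv1, hrv1⟩ := mnF_mem (le := le) hTne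
  obtain ⟨v2, hv2, hrv2⟩ := MxF_mem (le := le) hTne
  have hui : u ∈ S ∩ f i := ⟨huS, hi⟩
  have hub1 : rkF le (f i) v1 ≤ rkF le (f i) u := by
    rw [hrv1]
    exact le_trans hmn (mnF_le hui)
  have hub2 : rkF le (f i) u ≤ rkF le (f i) v2 := by
    rw [hrv2]
    exact le_trans (le_MxF hui) hMx
  -- u is between v1 and v2 in the chain f i
  have hc1 : le v1 u ∨ u = v1 := by
    rcases hpart.2 i v1 hv1.2 u hi with h1 | h1
    · exact Or.inl h1
    · right
      exact rk_inj h.antisymm h.trans h.refl hi hv1.2 (Or.inl h1)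
        (le_antisymm (rk_mono h.trans h1) hub1)
  have hc2 : le u v2 ∨ u = v2 := by
    rcases hpart.2 i u hi v2 hv2.2 with h1 | h1
    · exact Or.inl h1
    · right
      exact rk_inj h.antisymm h.trans h.refl hi hv2.2 (Or.inr h1)
        (le_antisymm hub2 (rk_mono h.trans h1))
  rcases hc1 with h1 | rfl
  · rcases hc2 with h2 | rfl
    · have := convexA h hreach h1 h2 (by rw [hT]; exact hv1.1) (by rw [hT]; exact hv2.1)
      rw [hT] at this; exact this
    · exact hv2.1
  · exact hv1.1
theorem sum_pow_identity {ι : Type} [DecidableEq ι] (s : Finset ι) (m : ι → ℕ) :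
    2 * ∑ C ∈ s.powerset, ∑ i ∈ C, m i = 2 ^ s.card * ∑ i ∈ s, m i := by
  induction s using Finset.induction_on with
  | empty => simp
  | @insert a s ha ih =>
    rw [Finset.sum_powerset_insert ha]
    have hstep : ∀ t ∈ s.powerset, ∑ i ∈ insert a t, m i = m a + ∑ i ∈ t, m i := by
      intro t ht
      exact Finset.sum_insert fun hat => ha (Finset.mem_powerset.mp ht hat)
    rw [Finset.sum_congr rfl hstep, Finset.sum_add_distrib, Finset.sum_const,
      Finset.card_powerset, Finset.sum_insert ha, Finset.card_insert_of_notMem ha,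
      smul_eq_mul]
    have hpow : 2 ^ (s.card + 1) = 2 ^ s.card * 2 := pow_succ 2 s.card
    zify at ih ⊢
    linear_combination 2 * ih

end Aux3

/-- if an NFA with `n` states has a co-lex order with a chain
partition into `p` nonempty chains, then (1) the states of the powerset DFA can
be partitioned into at most `2^p - 1` classes each of which is a `≤*`-chain, and
(2) the powerset DFA has at most `2^p * (n - p + 1) - 1` states. -/

theorem stmt_4 {A Q : Type} [LinearOrder A] [Fintype A] [Fintype Q]
    (N : NFA' A Q) (hreach : N.Reachable) (huse : N.Useful)
    (le : Q → Q → Prop) (hcolex : IsColexNFA N le)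
    (p : ℕ) (f : Fin p → Set Q) (hpart : IsChainPartition le p f)
    (hne : ∀ i, (f i).Nonempty) :
    (∃ (k : ℕ) (g : Fin k → Set (Set Q)),
        k ≤ 2 ^ p - 1 ∧
        (∀ i, g i ⊆ powReach N) ∧
        (∀ S ∈ powReach N, ∃! i, S ∈ g i) ∧
        (∀ i, ∀ S ∈ g i, ∀ T ∈ g i, powLe N S T ∨ powLe N T S)) ∧
    (powReach N).ncard ≤ 2 ^ p * (Fintype.card Q - p + 1) - 1 := by
  classical
  set R := powReach N with hR
  let sig : Set Q → Finset (Fin p) := fun S => Finset.univ.filter fun i => (S ∩ f i).Nonempty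
  have hsig_mem : ∀ (S : Set Q) (i : Fin p), i ∈ sig S ↔ (S ∩ f i).Nonempty := by
    intro S i; simp [sig]
  have hRne : ∀ S ∈ R, S.Nonempty := by
    rintro S ⟨α, hα, rfl⟩; exact Iw_nonempty_of_pref hα
  have hsig_ne : ∀ S ∈ R, (sig S).Nonempty := by
    intro S hS
    obtain ⟨q, hq⟩ := hRne S hS
    obtain ⟨i, hi, -⟩ := hpart.1 q
    exact ⟨i, (hsig_mem S i).mpr ⟨q, hq, hi⟩⟩
  have hcomp : ∀ S ∈ R, ∀ T ∈ R, sig S = sig T → powLe N S T ∨ powLe N T S := by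
    intro S hS T hT hsigeq
    by_cases hST : S = T
    · exact Or.inl (Or.inl hST)
    · have hsig' : ∀ i, (S ∩ f i).Nonempty ↔ (T ∩ f i).Nonempty := by
        intro i; rw [← hsig_mem S i, ← hsig_mem T i, hsigeq]
      obtain ⟨α, hαP, hSα⟩ := hS
      obtain ⟨β, hβP, hTβ⟩ := hT
      rcases colexLt_trichotomy α β with h1 | rfl | h1
      · exact Or.inl (Or.inr fun α' _ β' _ h2 h3 =>
          keyC hcolex hpart hsig' hSα.symm hTβ.symm h1 hST α' β' h2 h3)
      · exact absurd (hSα.trans hTβ.symm) hST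
      · exact Or.inr (Or.inr fun β' _ α' _ h2 h3 =>
          keyC hcolex hpart (fun i => (hsig' i).symm) hTβ.symm hSα.symm h1
            (Ne.symm hST) β' α' h2 h3)
  constructor
  · -- Part 1
    have hcard : Fintype.card {C : Finset (Fin p) // C.Nonempty} = 2 ^ p - 1 := by
      have h1 : Fintype.card {C : Finset (Fin p) // ¬ C = ∅} =
          Fintype.card (Finset (Fin p)) - Fintype.card {C : Finset (Fin p) // C = ∅} :=
        Fintype.card_subtype_compl _
      have h2 : Fintype.card {C : Finset (Fin p) // C.Nonempty} =
          Fintype.card {C : Finset (Fin p) // ¬ C = ∅} :=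
        Fintype.card_congr (Equiv.subtypeEquivRight fun C => by
          simp [Finset.nonempty_iff_ne_empty])
      rw [h2, h1, Fintype.card_subtype_eq, Fintype.card_finset, Fintype.card_fin]
    have e := Fintype.equivFinOfCardEq hcard
    refine ⟨2 ^ p - 1, fun j => {S | S ∈ R ∧ sig S = (e.symm j).1}, le_refl _, ?_, ?_, ?_⟩
    · intro i S hS; exact hS.1
    · intro S hS
      refine ⟨e ⟨sig S, hsig_ne S hS⟩, ⟨hS, by simp⟩, ?_⟩
      intro j hj
      have hj' : (⟨sig S, hsig_ne S hS⟩ : {C : Finset (Fin p) // C.Nonempty}) = e.symm j :=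
        Subtype.ext hj.2
      rw [hj', Equiv.apply_symm_apply]
    · intro i S hS T hT
      exact hcomp S hS.1 T hT.1 (hS.2.trans hT.2.symm)
  · -- Part 2
    have hfin : (powReach N).Finite := Set.toFinite _
    set Rf : Finset (Set Q) := hfin.toFinset with hRf
    have hRfm : ∀ S, S ∈ Rf ↔ S ∈ R := fun S => hfin.mem_toFinset
    have hncard : (powReach N).ncard = Rf.card := Set.ncard_eq_toFinset_card _ hfin
    set CS : Finset (Finset (Fin p)) := Finset.univ.filter (·.Nonempty) with hCS
    have hfib : Rf.card = ∑ C ∈ CS, (Rf.filter (fun S => sig S = C)).card :=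
      Finset.card_eq_sum_card_fiberwise (fun S hS => by
        simp only [hCS, Finset.mem_coe, Finset.mem_filter, Finset.mem_univ, true_and]
        exact hsig_ne S ((hRfm S).mp hS))
    set nn : Fin p → ℕ := fun i => (f i).ncard with hnn
    have hnn1 : ∀ i, 1 ≤ nn i := fun i => by
      rw [hnn, Nat.one_le_iff_ne_zero, ← Nat.pos_iff_ne_zero,
        Set.ncard_pos (Set.toFinite _)]
      exact hne i
    -- per-fiber bound
    have hfiber : ∀ C ∈ CS, (Rf.filter (fun S => sig S = C)).card ≤
        2 * (∑ i ∈ C, (nn i - 1)) + 1 := by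
      intro C _
      have hbound : (Rf.filter (fun S => sig S = C)).card ≤
          (Finset.Icc (2 * C.card) (2 * ∑ i ∈ C, nn i)).card := by
        apply Finset.card_le_card_of_injOn
          (fun S => ∑ i ∈ C, (mnF le (f i) S + MxF le (f i) S))
        · intro S hS
          rw [Finset.mem_coe, Finset.mem_filter] at hS
          have hSne : ∀ i ∈ C, (S ∩ f i).Nonempty := fun i hi =>
            (hsig_mem S i).mp (by rw [hS.2]; exact hi)
          rw [Finset.mem_coe, Finset.mem_Icc]
          constructor
          · calc 2 * C.card = ∑ _i ∈ C, 2 := by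
                  rw [Finset.sum_const, smul_eq_mul, mul_comm]
              _ ≤ _ := Finset.sum_le_sum fun i hi => by
                  obtain ⟨u, hu, hru⟩ := mnF_mem (le := le) (hSne i hi)
                  obtain ⟨v, hv, hrv⟩ := MxF_mem (le := le) (hSne i hi)
                  have h1 : 1 ≤ mnF le (f i) S := hru ▸ rk_pos hu.2 hcolex.refl
                  have h2 : 1 ≤ MxF le (f i) S := hrv ▸ rk_pos hv.2 hcolex.refl
                  omega
          · calc ∑ i ∈ C, (mnF le (f i) S + MxF le (f i) S)
                ≤ ∑ i ∈ C, (nn i + nn i) := Finset.sum_le_sum fun i hi => by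
                  obtain ⟨u, hu, hru⟩ := mnF_mem (le := le) (hSne i hi)
                  obtain ⟨v, hv, hrv⟩ := MxF_mem (le := le) (hSne i hi)
                  have h1 : mnF le (f i) S ≤ nn i := hru ▸ rk_le_card
                  have h2 : MxF le (f i) S ≤ nn i := hrv ▸ rk_le_card
                  omega
              _ = 2 * ∑ i ∈ C, nn i := by
                  rw [Finset.mul_sum]
                  exact Finset.sum_congr rfl fun i _ => (two_mul _).symm
        · intro S hS T hT hΦ
          replace hΦ : (∑ i ∈ C, (mnF le (f i) S + MxF le (f i) S)) =
              ∑ i ∈ C, (mnF le (f i) T + MxF le (f i) T) := hΦ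
          simp only [Finset.coe_filter, Set.mem_setOf_eq] at hS hT
          by_contra hST
          have hSR := (hRfm S).mp hS.1
          have hTR := (hRfm T).mp hT.1
          have hsig' : ∀ i, (S ∩ f i).Nonempty ↔ (T ∩ f i).Nonempty := fun i => by
            rw [← hsig_mem S i, ← hsig_mem T i, hS.2, hT.2]
          obtain ⟨α, hαP, hSα⟩ := hSR
          obtain ⟨β, hβP, hTβ⟩ := hTR
          have hSsub : ∀ i ∈ C, (S ∩ f i).Nonempty := fun i hi =>
            (hsig_mem S i).mp (by rw [hS.2]; exact hi)
          have hTsub : ∀ i ∈ C, (T ∩ f i).Nonempty := fun i hi =>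
            (hsig_mem T i).mp (by rw [hT.2]; exact hi)
          rcases colexLt_trichotomy α β with h1 | rfl | h1
          · have hmono : ∀ i ∈ C, mnF le (f i) S + MxF le (f i) S ≤
                mnF le (f i) T + MxF le (f i) T := fun i hi => by
              have := mono_lemma hcolex (hpart.2 i) hSα.symm hTβ.symm h1
                (hSsub i hi) (hTsub i hi)
              omega
            have hpt : ∀ i ∈ C, mnF le (f i) S + MxF le (f i) S =
                mnF le (f i) T + MxF le (f i) T := by
              intro i hi
              by_contra hlt
              have : ∑ i ∈ C, (mnF le (f i) S + MxF le (f i) S) <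
                  ∑ i ∈ C, (mnF le (f i) T + MxF le (f i) T) :=
                Finset.sum_lt_sum hmono ⟨i, hi, lt_of_le_of_ne (hmono i hi) hlt⟩
              omega
            have hpt' : ∀ i, (S ∩ f i).Nonempty →
                (mnF le (f i) S = mnF le (f i) T ∧ MxF le (f i) S = MxF le (f i) T) := by
              intro i hiS
              have hiC : i ∈ C := by rw [← hS.2]; exact (hsig_mem S i).mpr hiS
              have hm := mono_lemma hcolex (hpart.2 i) hSα.symm hTβ.symm h1 hiS
                ((hsig' i).mp hiS)
              have he := hpt i hiC
              omega
            apply hST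
            apply Set.Subset.antisymm
            · exact half_lemma hcolex hreach hpart hTβ.symm fun i hiS =>
                ⟨(hsig' i).mp hiS, le_of_eq (hpt' i hiS).1.symm, le_of_eq (hpt' i hiS).2⟩
            · exact half_lemma hcolex hreach hpart hSα.symm fun i hiT => by
                have hiS := (hsig' i).mpr hiT
                exact ⟨hiS, le_of_eq (hpt' i hiS).1, le_of_eq (hpt' i hiS).2.symm⟩
          · exact hST (hSα.trans hTβ.symm)
          · have hmono : ∀ i ∈ C, mnF le (f i) T + MxF le (f i) T ≤
                mnF le (f i) S + MxF le (f i) S := fun i hi => by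
              have := mono_lemma hcolex (hpart.2 i) hTβ.symm hSα.symm h1
                (hTsub i hi) (hSsub i hi)
              omega
            have hpt : ∀ i ∈ C, mnF le (f i) T + MxF le (f i) T =
                mnF le (f i) S + MxF le (f i) S := by
              intro i hi
              by_contra hlt
              have : ∑ i ∈ C, (mnF le (f i) T + MxF le (f i) T) <
                  ∑ i ∈ C, (mnF le (f i) S + MxF le (f i) S) :=
                Finset.sum_lt_sum hmono ⟨i, hi, lt_of_le_of_ne (hmono i hi) hlt⟩
              omega
            have hpt' : ∀ i, (T ∩ f i).Nonempty →
                (mnF le (f i) T = mnF le (f i) S ∧ MxF le (f i) T = MxF le (f i) S) := by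
              intro i hiT
              have hiC : i ∈ C := by rw [← hT.2]; exact (hsig_mem T i).mpr hiT
              have hm := mono_lemma hcolex (hpart.2 i) hTβ.symm hSα.symm h1 hiT
                ((hsig' i).mpr hiT)
              have he := hpt i hiC
              omega
            apply hST
            apply Set.Subset.antisymm
            · exact half_lemma hcolex hreach hpart hTβ.symm fun i hiS => by
                have hiT := (hsig' i).mp hiS
                exact ⟨hiT, le_of_eq (hpt' i hiT).1, le_of_eq (hpt' i hiT).2.symm⟩
            · exact half_lemma hcolex hreach hpart hSα.symm fun i hiT =>
                ⟨(hsig' i).mpr hiT, le_of_eq (hpt' i hiT).1.symm, le_of_eq (hpt' i hiT).2⟩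
      refine le_trans hbound ?_
      rw [Nat.card_Icc]
      have hsum : ∑ i ∈ C, (nn i - 1) + C.card = ∑ i ∈ C, nn i := by
        rw [Finset.card_eq_sum_ones, ← Finset.sum_add_distrib]
        exact Finset.sum_congr rfl fun i _ => by have := hnn1 i; omega
      omega
    -- sum up
    have htot : Rf.card ≤ 2 * (∑ C ∈ CS, ∑ i ∈ C, (nn i - 1)) + CS.card := by
      rw [hfib]
      calc ∑ C ∈ CS, (Rf.filter (fun S => sig S = C)).card
          ≤ ∑ C ∈ CS, (2 * (∑ i ∈ C, (nn i - 1)) + 1) := Finset.sum_le_sum hfiber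
        _ = 2 * (∑ C ∈ CS, ∑ i ∈ C, (nn i - 1)) + CS.card := by
            rw [Finset.sum_add_distrib, Finset.sum_const, Finset.mul_sum, smul_eq_mul,
              mul_one]
    have hCSerase : CS = (Finset.univ : Finset (Finset (Fin p))).erase ∅ := by
      ext C
      simp [hCS, Finset.mem_erase, Finset.nonempty_iff_ne_empty, and_comm]
    have hCScard : CS.card = 2 ^ p - 1 := by
      rw [hCSerase, Finset.card_erase_of_mem (Finset.mem_univ _), Finset.card_univ,
        Fintype.card_finset, Fintype.card_fin]
    have hCSsum : ∑ C ∈ CS, ∑ i ∈ C, (nn i - 1) =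
        ∑ C ∈ (Finset.univ : Finset (Finset (Fin p))), ∑ i ∈ C, (nn i - 1) := by
      rw [hCSerase]
      exact Finset.sum_erase _ (by simp)
    have hid : 2 * ∑ C ∈ (Finset.univ : Finset (Finset (Fin p))), ∑ i ∈ C, (nn i - 1) =
        2 ^ p * ∑ i : Fin p, (nn i - 1) := by
      have := sum_pow_identity (Finset.univ : Finset (Fin p)) (fun i => nn i - 1)
      rwa [Finset.powerset_univ, Finset.card_univ, Fintype.card_fin] at this
    have hmsum : ∑ i : Fin p, (nn i - 1) + p = ∑ i : Fin p, nn i := by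
      have h' : ∑ i : Fin p, (nn i - 1) + ∑ _i : Fin p, 1 = ∑ i : Fin p, nn i := by
        rw [← Finset.sum_add_distrib]
        exact Finset.sum_congr rfl fun i _ => by have := hnn1 i; omega
      simpa using h'
    -- sum of chain sizes is at most the number of states
    have hnle : ∑ i : Fin p, nn i ≤ Fintype.card Q := by
      have hFi : ∀ i : Fin p, nn i = ((Set.toFinite (f i)).toFinset).card := fun i =>
        Set.ncard_eq_toFinset_card _ _
      have hdisj : ∀ i ∈ (Finset.univ : Finset (Fin p)), ∀ j ∈ Finset.univ, i ≠ j →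
          Disjoint ((Set.toFinite (f i)).toFinset) ((Set.toFinite (f j)).toFinset) := by
        intro i _ j _ hij
        rw [Finset.disjoint_left]
        intro q hqi hqj
        rw [Set.Finite.mem_toFinset] at hqi hqj
        obtain ⟨k, -, hu⟩ := hpart.1 q
        exact hij ((hu i hqi).trans (hu j hqj).symm)
      calc ∑ i : Fin p, nn i = ∑ i : Fin p, ((Set.toFinite (f i)).toFinset).card :=
            Finset.sum_congr rfl fun i _ => hFi i
        _ = (Finset.univ.biUnion fun i => (Set.toFinite (f i)).toFinset).card :=
            (Finset.card_biUnion hdisj).symm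
        _ ≤ Fintype.card Q := le_trans (Finset.card_le_univ _) (le_of_eq Finset.card_univ)
    -- final arithmetic
    rw [hncard]
    have h2p : 1 ≤ 2 ^ p := Nat.one_le_two_pow
    have hM : ∑ i : Fin p, (nn i - 1) ≤ Fintype.card Q - p := by omega
    have hmul := Nat.mul_le_mul_left (2 ^ p) hM
    have hdist : 2 ^ p * (Fintype.card Q - p + 1) =
        2 ^ p * (Fintype.card Q - p) + 2 ^ p := Nat.mul_succ _ _
    omega
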